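/- If there exists at least one Borel probability measure μ on G satisfying the 'no deterministic images' condition, then the Borel probability measure on X invariant under every isometry of X is unique; that is, any two Borel probability measures on X each invariant under every isometry of X are equal. -/

import Mathlib

open MeasureTheory Topology Filter Metric Set

variable {X : Type*} [MetricSpace X] [CompactSpace X]

/-- The group of isometries of `X`, with the sup metric
`d_C(g,h) = sup_{x ∈ X} d (g x) (h x)` (induced from `C(X, X)`). -/
noncomputable instance : MetricSpace (X ≃ᵢ X) :=
  MetricSpace.induced (fun g => (⟨g, g.continuous⟩ : C(X, X)))
    (fun g h hgh => by
      ext x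
      exact DFunLike.congr_fun hgh x)
    inferInstance

noncomputable instance : MeasurableSpace (X ≃ᵢ X) := borel _
instance : BorelSpace (X ≃ᵢ X) := ⟨rfl⟩

/-- The (closed) support of a measure: the set of points all of whose open
neighborhoods have positive measure. -/
def msupp {α : Type*} [TopologicalSpace α] [MeasurableSpace α] (μ : Measure α) : Set α :=
  {x | ∀ U : Set α, IsOpen U → x ∈ U → 0 < μ U}

/-- `μ` satisfies the *no deterministic images* condition: there is no pair of proper
(nonempty) closed subsets `A, B ⊆ X` with `g '' A = B` for every `g ∈ supp μ`. -/
def NoDetImages (μ : Measure (X ≃ᵢ X)) : Prop :=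
  ¬ ∃ A B : Set X, A.Nonempty ∧ B.Nonempty ∧ IsClosed A ∧ IsClosed B ∧
      A ≠ Set.univ ∧ B ≠ Set.univ ∧ ∀ g ∈ msupp μ, g '' A = B

/-- `μ * ν`: the pushforward of `μ ⊗ ν` under the action map `(g, x) ↦ g x`. -/
noncomputable def actConv [MeasurableSpace X] (μ : Measure (X ≃ᵢ X)) (ν : Measure X) :
    Measure X :=
  (μ.prod ν).map (fun p => p.1 p.2)

/-- `convSeq μ ν n = μₙ * μₙ₋₁ * ⋯ * μ₁ * ν` (with `μ (k-1)` playing the role of `μₖ`). -/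
noncomputable def convSeq [MeasurableSpace X] (μ : ℕ → Measure (X ≃ᵢ X)) (ν : Measure X) :
    ℕ → Measure X
  | 0 => ν
  | n + 1 => actConv (μ n) (convSeq μ ν n)

open scoped NNReal ENNReal BoundedContinuousFunction

/-! ### Auxiliary results about the isometry group of a compact metric space -/

/-- A distance-preserving self-map of a compact metric space is surjective. -/
theorem isometry_self_surj (f : X → X) (hf : Isometry f) : Function.Surjective f := by
  intro x
  by_contra hx
  have hxr : x ∉ range f := fun ⟨y, hy⟩ => hx ⟨y, hy⟩
  have hrange : IsClosed (range f) := (isCompact_range hf.continuous).isClosed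
  have hne : (range f).Nonempty := ⟨f x, mem_range_self x⟩
  have hpos : 0 < infDist x (range f) :=
    (hrange.notMem_iff_infDist_pos hne).1 hxr
  set ε := infDist x (range f)
  have hiter : ∀ n : ℕ, Isometry (f^[n]) := by
    intro n; induction n with
    | zero => simpa using isometry_id
    | succ n ih => rw [Function.iterate_succ]; exact ih.comp hf
  have hdist : ∀ k : ℕ, 1 ≤ k → ε ≤ dist (f^[k] x) x := by
    intro k hk
    have : f^[k] x ∈ range f := by
      obtain ⟨j, rfl⟩ := Nat.exists_eq_add_of_le hk
      rw [add_comm, Function.iterate_add_apply]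
      exact ⟨f^[j] x, by rw [Function.iterate_one, ← Function.iterate_succ_apply,
        Function.iterate_succ_apply']⟩
    simpa [dist_comm] using infDist_le_dist_of_mem (x := x) this
  set u : ℕ → X := fun n => f^[n] x with hu
  obtain ⟨l, _, φ, hφ, hconv⟩ := isCompact_univ.tendsto_subseq (x := u) (fun n => mem_univ _)
  have hcauchy : CauchySeq (u ∘ φ) := hconv.cauchySeq
  rw [Metric.cauchySeq_iff] at hcauchy
  obtain ⟨N, hN⟩ := hcauchy ε hpos
  have hlt := hN (N + 1) (by omega) N le_rfl
  have hk1 : 1 ≤ φ (N + 1) - φ N := by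
    have := hφ (show N < N + 1 by omega)
    omega
  have heq : dist (u (φ (N + 1))) (u (φ N)) = dist (f^[φ (N+1) - φ N] x) x := by
    have hle := hφ (show N < N + 1 by omega)
    have : u (φ (N + 1)) = f^[φ N] (f^[φ (N+1) - φ N] x) := by
      rw [hu]; simp only []
      rw [← Function.iterate_add_apply]
      congr 1; omega
    rw [this]
    have : u (φ N) = f^[φ N] x := rfl
    rw [this, (hiter (φ N)).dist_eq]
  rw [show ((u ∘ φ) (N+1)) = u (φ (N+1)) from rfl, show ((u ∘ φ) N) = u (φ N) from rfl,
    heq] at hlt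
  exact absurd hlt (not_lt.2 (hdist _ hk1))

/-- The isometric embedding of the isometry group into `C(X, X)`. -/
noncomputable def isomToCM : (X ≃ᵢ X) → C(X, X) := fun g => ⟨g, g.continuous⟩

theorem isometry_isomToCM : Isometry (isomToCM (X := X)) := fun _ _ => rfl

theorem isom_dist_apply_le (g h : X ≃ᵢ X) (x : X) : dist (g x) (h x) ≤ dist g h :=
  ContinuousMap.dist_apply_le_dist (f := isomToCM g) (g := isomToCM h) x

theorem isom_dist_le_of {g h : X ≃ᵢ X} {C : ℝ} (h0 : 0 ≤ C)
    (H : ∀ x, dist (g x) (h x) ≤ C) : dist g h ≤ C :=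
  (ContinuousMap.dist_le (f := isomToCM g) (g := isomToCM h) h0).2 H

instance : Nonempty (X ≃ᵢ X) := ⟨IsometryEquiv.refl X⟩

/-- The isometry group of a compact metric space is compact. -/
instance : CompactSpace (X ≃ᵢ X) := by
  set S : Set C(X, X) := range (isomToCM (X := X)) with hS
  have himg : ContinuousMap.toFun '' S = {f : X → X | ∀ a b, dist (f a) (f b) = dist a b} := by
    ext f
    constructor
    · rintro ⟨F, ⟨g, rfl⟩, rfl⟩
      exact fun a b => g.dist_eq a b
    · intro hf
      have hiso : Isometry f := Isometry.of_dist_eq hf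
      have hbij : Function.Bijective f := ⟨hiso.injective, isometry_self_surj f hiso⟩
      exact ⟨isomToCM ⟨Equiv.ofBijective f hbij, hiso⟩, ⟨_, rfl⟩, rfl⟩
  have hPc : IsCompact {f : X → X | ∀ a b, dist (f a) (f b) = dist a b} := by
    have hcl : IsClosed {f : X → X | ∀ a b, dist (f a) (f b) = dist a b} := by
      have : {f : X → X | ∀ a b, dist (f a) (f b) = dist a b} =
          ⋂ (a : X) (b : X), {f : X → X | dist (f a) (f b) = dist a b} := by
        ext f; simp [Set.mem_iInter]
      rw [this]
      exact isClosed_iInter fun a => isClosed_iInter fun b =>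
        isClosed_eq (Continuous.dist (continuous_apply a) (continuous_apply b)) continuous_const
    exact hcl.isCompact
  have hSc : IsCompact S := by
    apply ArzelaAscoli.isCompact_of_equicontinuous S (by rw [himg]; exact hPc)
    apply Metric.equicontinuous_of_continuity_modulus id tendsto_id
    rintro x y ⟨F, hF⟩
    obtain ⟨g, rfl⟩ := hF
    simp [isomToCM, (g : X ≃ᵢ X).dist_eq]
  constructor
  rw [(isometry_isomToCM.isEmbedding).isCompact_iff, Set.image_univ]
  exact hSc

/-- The isometry group of a compact metric space is a topological group. -/
instance : IsTopologicalGroup (X ≃ᵢ X) where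
  continuous_mul := by
    have : LipschitzWith 2 (fun p : (X ≃ᵢ X) × (X ≃ᵢ X) => p.1 * p.2) := by
      apply LipschitzWith.of_dist_le_mul
      intro p q
      apply isom_dist_le_of (by positivity)
      intro x
      calc dist ((p.1 * p.2) x) ((q.1 * q.2) x)
          ≤ dist (p.1 (p.2 x)) (p.1 (q.2 x)) + dist (p.1 (q.2 x)) (q.1 (q.2 x)) :=
            dist_triangle _ _ _
        _ ≤ dist p.2 q.2 + dist p.1 q.1 := by
            gcongr
            · rw [p.1.dist_eq]; exact isom_dist_apply_le _ _ x
            · exact isom_dist_apply_le _ _ _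
        _ ≤ 2 * dist p q := by
            rw [Prod.dist_eq, two_mul]
            gcongr <;> [exact le_max_right _ _; exact le_max_left _ _]
    exact this.continuous
  continuous_inv := by
    have : LipschitzWith 1 (fun g : X ≃ᵢ X => g⁻¹) := by
      apply LipschitzWith.of_dist_le_mul
      intro g h
      rw [NNReal.coe_one, one_mul]
      apply isom_dist_le_of dist_nonneg
      intro x
      calc dist (g⁻¹ x) (h⁻¹ x) = dist (h (g⁻¹ x)) (h (h⁻¹ x)) := (h.dist_eq _ _).symm
        _ = dist (h (g⁻¹ x)) (g (g⁻¹ x)) := by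
            rw [IsometryEquiv.apply_inv_self, IsometryEquiv.apply_inv_self]
        _ ≤ dist h g := isom_dist_apply_le _ _ _
        _ = dist g h := dist_comm _ _
    exact this.continuous

/-- The action map `(g, x) ↦ g x` is continuous. -/
theorem isom_continuous_act : Continuous (fun p : (X ≃ᵢ X) × X => p.1 p.2) := by
  have : LipschitzWith 2 (fun p : (X ≃ᵢ X) × X => p.1 p.2) := by
    apply LipschitzWith.of_dist_le_mul
    intro p q
    calc dist (p.1 p.2) (q.1 q.2)
        ≤ dist (p.1 p.2) (p.1 q.2) + dist (p.1 q.2) (q.1 q.2) := dist_triangle _ _ _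
      _ ≤ dist p.2 q.2 + dist p.1 q.1 := by
          gcongr
          · rw [p.1.dist_eq]
          · exact isom_dist_apply_le _ _ _
      _ ≤ 2 * dist p q := by
          rw [Prod.dist_eq, two_mul]
          gcongr <;> [exact le_max_right _ _; exact le_max_left _ _]
  exact this.continuous

/-- **Remark (uniqueness of the invariant measure).** If there exists at least one Borel
probability measure on the isometry group of `X` satisfying the no-deterministic-images
condition, then the isometry-invariant Borel probability measure on `X` is unique. -/
theorem invariant_measure_unique [MeasurableSpace X] [BorelSpace X]
    (hexists : ∃ μ : ProbabilityMeasure (X ≃ᵢ X), NoDetImages (μ : Measure (X ≃ᵢ X)))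
    (m₁ m₂ : Measure X) [IsProbabilityMeasure m₁] [IsProbabilityMeasure m₂]
    (h₁ : ∀ g : X ≃ᵢ X, m₁.map g = m₁) (h₂ : ∀ g : X ≃ᵢ X, m₂.map g = m₂) :
    m₁ = m₂ := by
  obtain ⟨μ, hμ⟩ := hexists
  -- `X` is nonempty since it carries a probability measure
  have hXne : Nonempty X := by
    by_contra h
    rw [not_nonempty_iff] at h
    have h1 := measure_univ (μ := m₁)
    rw [Set.univ_eq_empty_iff.mpr h] at h1
    simp at h1
  obtain ⟨x₀⟩ := id hXne
  haveI := hXne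
  -- minimality: every orbit of the full isometry group is dense
  have hmin : ∀ x : X, Dense (range fun g : X ≃ᵢ X => g x) := by
    intro x
    rw [dense_iff_closure_eq]
    by_contra hA
    apply hμ
    have himgS : ∀ g : X ≃ᵢ X,
        (g : X → X) '' (range fun h : X ≃ᵢ X => h x) = range fun h : X ≃ᵢ X => h x := by
      intro g; ext y
      constructor
      · rintro ⟨-, ⟨h, rfl⟩, rfl⟩; exact ⟨g * h, rfl⟩
      · rintro ⟨h, rfl⟩
        exact ⟨g⁻¹ (h x), ⟨g⁻¹ * h, rfl⟩, by simp⟩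
    refine ⟨closure (range fun g : X ≃ᵢ X => g x), closure (range fun g : X ≃ᵢ X => g x),
      ⟨x, subset_closure ⟨1, rfl⟩⟩, ⟨x, subset_closure ⟨1, rfl⟩⟩,
      isClosed_closure, isClosed_closure, hA, hA, ?_⟩
    intro g _
    calc (g : X → X) '' closure (range fun h : X ≃ᵢ X => h x)
        = closure ((g : X → X) '' (range fun h : X ≃ᵢ X => h x)) := by
          rw [← IsometryEquiv.coe_toHomeomorph]
          exact g.toHomeomorph.image_closure _
      _ = closure (range fun h : X ≃ᵢ X => h x) := by rw [himgS g]
  -- the (normalized) Haar measure on the compact isometry group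
  set lam : Measure (X ≃ᵢ X) := Measure.haarMeasure ⊤ with hlam
  haveI hlamP : IsProbabilityMeasure lam := by
    constructor
    have := Measure.haarMeasure_self (G := X ≃ᵢ X) (K₀ := ⊤)
    rwa [TopologicalSpace.PositiveCompacts.coe_top] at this
  -- the key computation: the integral of any bounded continuous function against any
  -- invariant probability measure equals an averaged value independent of the measure
  have key : ∀ (m : Measure X), IsProbabilityMeasure m → (∀ g : X ≃ᵢ X, m.map g = m) →
      ∀ f : X →ᵇ ℝ≥0, ∫⁻ x, (f x : ℝ≥0∞) ∂m = ∫⁻ g : X ≃ᵢ X, (f (g⁻¹ x₀) : ℝ≥0∞) ∂lam := by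
    intro m hm hinv f
    haveI := hm
    have hfm : Measurable fun x => (f x : ℝ≥0∞) :=
      measurable_coe_nnreal_ennreal.comp f.continuous.measurable
    have stepA : ∀ g : X ≃ᵢ X, ∫⁻ x, (f (g⁻¹ x) : ℝ≥0∞) ∂m = ∫⁻ x, (f x : ℝ≥0∞) ∂m := by
      intro g
      conv_rhs => rw [← hinv g⁻¹, lintegral_map hfm (g⁻¹).continuous.measurable]
    set F : X → ℝ≥0∞ := fun x => ∫⁻ g : X ≃ᵢ X, (f (g⁻¹ x) : ℝ≥0∞) ∂lam with hF
    have hprod : AEMeasurable (fun p : (X ≃ᵢ X) × X => (f (p.1⁻¹ p.2) : ℝ≥0∞)) (lam.prod m) := by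
      apply Continuous.aemeasurable
      exact ENNReal.continuous_coe.comp (f.continuous.comp (isom_continuous_act.comp
        ((continuous_inv.comp continuous_fst).prodMk continuous_snd)))
    have hswap : ∫⁻ g : X ≃ᵢ X, ∫⁻ x, (f (g⁻¹ x) : ℝ≥0∞) ∂m ∂lam = ∫⁻ x, F x ∂m :=
      lintegral_lintegral_swap hprod
    have hBC : ∫⁻ x, (f x : ℝ≥0∞) ∂m = ∫⁻ x, F x ∂m := by
      calc ∫⁻ x, (f x : ℝ≥0∞) ∂m
          = ∫⁻ _g : X ≃ᵢ X, (∫⁻ x, (f x : ℝ≥0∞) ∂m) ∂lam := by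
            rw [lintegral_const, measure_univ, mul_one]
        _ = ∫⁻ g : X ≃ᵢ X, ∫⁻ x, (f (g⁻¹ x) : ℝ≥0∞) ∂m ∂lam :=
            lintegral_congr fun g => (stepA g).symm
        _ = ∫⁻ x, F x ∂m := hswap
    -- `F` is invariant under the isometry group
    have hFinv : ∀ (h : X ≃ᵢ X) (x : X), F (h x) = F x := by
      intro h x
      have hmap : lam.map (fun g => h * g) = lam := MeasureTheory.map_mul_left_eq_self lam h
      have hmeas : Measurable fun g : X ≃ᵢ X => (f (g⁻¹ (h x)) : ℝ≥0∞) := by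
        apply Continuous.measurable
        exact ENNReal.continuous_coe.comp (f.continuous.comp (isom_continuous_act.comp
          (continuous_inv.prodMk continuous_const)))
      calc F (h x) = ∫⁻ g : X ≃ᵢ X, (f (g⁻¹ (h x)) : ℝ≥0∞) ∂lam := rfl
        _ = ∫⁻ g : X ≃ᵢ X, (f (g⁻¹ (h x)) : ℝ≥0∞) ∂(lam.map (fun g => h * g)) := by
            rw [hmap]
        _ = ∫⁻ g : X ≃ᵢ X, (f ((h * g)⁻¹ (h x)) : ℝ≥0∞) ∂lam := by
            rw [lintegral_map hmeas (measurable_const_mul h)]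
        _ = ∫⁻ g : X ≃ᵢ X, (f (g⁻¹ x) : ℝ≥0∞) ∂lam := by
            apply lintegral_congr
            intro g
            congr 2
            show (h * g)⁻¹ (h x) = g⁻¹ x
            rw [mul_inv_rev]
            show g⁻¹ (h⁻¹ (h x)) = g⁻¹ x
            rw [IsometryEquiv.inv_apply_self]
    -- `F` takes finite values
    obtain ⟨z, -, hz'⟩ := isCompact_univ.exists_isMaxOn (univ_nonempty) f.continuous.continuousOn
    have hz : ∀ w : X, f w ≤ f z := fun w => hz' (mem_univ w)
    have hFlt : ∀ x, F x < ⊤ := by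
      intro x
      have hle : F x ≤ (f z : ℝ≥0∞) := by
        calc F x ≤ ∫⁻ _g : X ≃ᵢ X, (f z : ℝ≥0∞) ∂lam :=
              lintegral_mono fun g => ENNReal.coe_le_coe.2 (hz _)
          _ = (f z : ℝ≥0∞) := by rw [lintegral_const, measure_univ, mul_one]
      exact hle.trans_lt ENNReal.coe_lt_top
    -- `F` is constant, by minimality together with a uniform continuity estimate
    have hFconst : ∀ x, F x = F x₀ := by
      have main : ∀ ε : ℝ≥0, 0 < ε → ∀ x : X, F x ≤ F x₀ + ε ∧ F x₀ ≤ F x + ε := by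
        intro ε hε x
        have hucont := CompactSpace.uniformContinuous_of_continuous f.continuous
        obtain ⟨δ, hδpos, hδ⟩ := Metric.uniformContinuous_iff.1 hucont ε
          (by exact_mod_cast hε)
        have est : ∀ a b : X, dist a b < δ → F a ≤ F b + (ε : ℝ≥0∞) := by
          intro a b hab
          calc F a ≤ ∫⁻ g : X ≃ᵢ X, ((f (g⁻¹ b) : ℝ≥0∞) + (ε : ℝ≥0∞)) ∂lam := by
                apply lintegral_mono
                intro g
                have hd : dist (g⁻¹ a) (g⁻¹ b) < δ := by
                  rw [(g⁻¹ : X ≃ᵢ X).dist_eq]; exact hab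
                have h4 := le_of_lt (hδ hd)
                rw [NNReal.dist_eq] at h4
                have h3 : f (g⁻¹ a) ≤ f (g⁻¹ b) + ε := by
                  rw [← NNReal.coe_le_coe]
                  push_cast
                  have h5 := (abs_sub_le_iff.1 h4).1
                  linarith
                calc ((f (g⁻¹ a) : ℝ≥0) : ℝ≥0∞) ≤ ((f (g⁻¹ b) + ε : ℝ≥0) : ℝ≥0∞) :=
                      ENNReal.coe_le_coe.2 h3
                  _ = (f (g⁻¹ b) : ℝ≥0∞) + (ε : ℝ≥0∞) := by push_cast; rfl
            _ = F b + (ε : ℝ≥0∞) := by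
                rw [lintegral_add_right _ measurable_const, lintegral_const, measure_univ,
                  mul_one]
        obtain ⟨y, hyS, hy⟩ := (hmin x₀).exists_dist_lt x hδpos
        obtain ⟨h, rfl⟩ := hyS
        constructor
        · calc F x ≤ F (h x₀) + ε := est x (h x₀) hy
            _ = F x₀ + ε := by rw [hFinv]
        · calc F x₀ = F (h x₀) := (hFinv h x₀).symm
            _ ≤ F x + ε := est (h x₀) x (by rwa [dist_comm] at hy)
      intro x
      apply le_antisymm
      · apply ENNReal.le_of_forall_pos_le_add
        intro ε hε _
        exact (main ε hε x).1
      · apply ENNReal.le_of_forall_pos_le_add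
        intro ε hε _
        exact (main ε hε x).2
    calc ∫⁻ x, (f x : ℝ≥0∞) ∂m = ∫⁻ x, F x ∂m := hBC
      _ = ∫⁻ _x, F x₀ ∂m := lintegral_congr hFconst
      _ = F x₀ := by rw [lintegral_const, measure_univ, mul_one]
  apply ext_of_forall_lintegral_eq_of_IsFiniteMeasure
  intro f
  rw [key m₁ ‹_› h₁ f, key m₂ ‹_› h₂ f]
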